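/- arXiv:1512.08130 — 4 statements merged into one kernel-verified Lean document; each statement's English description precedes it below -/
import Mathlib

section
/- Brooks' Theorem for Independence Number: If G is a finite simple graph with maximum degree Δ(G) ≥ 3 that contains no clique on Δ(G)+1 vertices, then the independence number of G satisfies α(G) ≥ |G|/Δ(G); equivalently, Δ(G)·α(G) ≥ |G|. -/
open SimpleGraph Finset

/-- The independence number of `G`: the maximum size of a set of pairwise nonadjacent
vertices. -/
def indepNum {V : Type*} [Fintype V] [DecidableEq V] (G : SimpleGraph V)
    [DecidableRel G.Adj] : ℕ :=
  ((Finset.univ : Finset (Finset V)).filter fun I => ∀ u ∈ I, ∀ v ∈ I, ¬ G.Adj u v).sup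
    Finset.card

/-!
Colour by induction on a finite vertex set `A`. A vertex with fewer than `k` neighbours in `A`
is coloured last. If at most one vertex separates `A`, colourings of the two sides agree after
permuting colours. Otherwise `A` is 2-connected, every vertex has `k` neighbours in `A`, and
`A` is not a clique. Lovász's argument then finds `b` with nonadjacent neighbours `a`, `c`
such that `A \ {a, c}` is connected: give `a` and `c` the same colour and colour the rest
greedily by decreasing distance to `b`, so that every vertex, `b` included, sees at most
`k - 1` colours. Such a triple is an induced path `a b c` when no pair of vertices separates
`A`; when a pair `{x, y}` does, with a side `S` of least size, take for `a` and `c` neighbours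
of `x` in `S` and outside it. The colour classes of a `Δ`-colouring are independent sets,
hence `|G| ≤ Δ α`.
-/

namespace SimpleGraph

variable {V : Type*} {k : ℕ}

/-- `G.induce s` as a graph on all of `V`, with the vertices outside `s` isolated: a colouring
of `G.restrict s` is a function on `V` that colours `s` properly. -/
def restrict (G : SimpleGraph V) (s : Set V) : SimpleGraph V where
  Adj u w := G.Adj u w ∧ u ∈ s ∧ w ∈ s
  symm := ⟨fun _ _ h => ⟨h.1.symm, h.2.2, h.2.1⟩⟩
  loopless := ⟨fun _ h => G.irrefl h.1⟩

variable {G H : SimpleGraph V} {s : Set V} {u w : V}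

@[simp]
lemma restrict_adj : (G.restrict s).Adj u w ↔ G.Adj u w ∧ u ∈ s ∧ w ∈ s := Iff.rfl

lemma restrict_univ : G.restrict Set.univ = G := by
  ext; simp

lemma Reachable.mem_of_closed {P : Set V} (hu : u ∈ P)
    (hP : ∀ ⦃x z⦄, H.Reachable u x → x ∈ P → H.Adj x z → z ∈ P) (h : H.Reachable u w) :
    w ∈ P := by
  rw [reachable_iff_reflTransGen] at h
  induction h with
  | refl => exact hu
  | tail hux hxz ih => exact hP ((reachable_iff_reflTransGen _ _).2 hux) ih hxz

lemma Reachable.mem_of_restrict_of_ne (h : (G.restrict s).Reachable u w) (hne : u ≠ w) :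
    w ∈ s :=
  (h.mem_of_closed (P := {z | z = u ∨ z ∈ s}) (Or.inl rfl)
    fun _ _ _ _ (hxz : (G.restrict s).Adj _ _) => Or.inr hxz.2.2).resolve_left hne.symm

lemma Reachable.exists_adj_dist_lt (h : H.Reachable u w) (hne : u ≠ w) :
    ∃ x, H.Adj u x ∧ H.dist x w < H.dist u w := by
  obtain ⟨p, hp⟩ := h.exists_walk_length_eq_dist
  cases p with
  | nil => exact absurd rfl hne
  | cons hux q =>
    refine ⟨_, hux, ?_⟩
    have := dist_le q
    simp only [Walk.length_cons] at hp
    omega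

lemma exists_ne_not_adj_of_cliqueFree {A : Finset V} {n : ℕ} (hcf : G.CliqueFree n)
    (hA : n ≤ #A) : ∃ x ∈ A, ∃ y ∈ A, x ≠ y ∧ ¬G.Adj x y := by
  by_contra! h
  obtain ⟨t, htA, ht⟩ := exists_subset_card_eq hA
  exact hcf t ⟨fun u hu w hw huw => h u (htA hu) w (htA hw) huw, ht⟩

theorem Colorable.restrict_union {s t : Set V} {v : V} (hst : s ∩ t ⊆ {v})
    (hcross : ∀ x ∈ s \ t, ∀ y ∈ t \ s, ¬G.Adj x y)
    (hs : (G.restrict s).Colorable k) (ht : (G.restrict t).Colorable k) :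
    (G.restrict (s ∪ t)).Colorable k := by
  classical
  obtain ⟨f₁⟩ := hs
  obtain ⟨f₂⟩ := ht
  -- recolour `t` so that both colourings give `v` the colour `f₁ v`
  set σ := Equiv.swap (f₂ v) (f₁ v)
  have hmixed : ∀ x y, x ∈ s → y ∈ t → y ∉ s → G.Adj x y → f₁ x ≠ σ (f₂ y) := by
    intro x y hx hy hys hxy
    by_cases hxt : x ∈ t
    · obtain rfl : x = v := hst ⟨hx, hxt⟩
      rw [← Equiv.swap_apply_left (f₂ x) (f₁ x)]
      exact σ.injective.ne (f₂.valid ⟨hxy, hxt, hy⟩)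
    · exact absurd hxy (hcross x ⟨hx, hxt⟩ y ⟨hy, hys⟩)
  refine ⟨Coloring.mk (fun z => if z ∈ s then f₁ z else σ (f₂ z)) ?_⟩
  rintro x y ⟨hxy, hx, hy⟩
  by_cases hxs : x ∈ s <;> by_cases hys : y ∈ s <;> simp only [hxs, hys, if_true, if_false]
  · exact f₁.valid ⟨hxy, hxs, hys⟩
  · exact hmixed x y hxs (hy.resolve_left hys) hys hxy
  · exact (hmixed y x hys (hx.resolve_left hxs) hxs hxy.symm).symm
  · exact σ.injective.ne (f₂.valid ⟨hxy, hx.resolve_left hxs, hy.resolve_left hys⟩)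

section Greedy

variable [DecidableEq V] [DecidableRel G.Adj]

lemma exists_coloring_restrict_insert {A : Finset V} {v : V}
    (f : (G.restrict A).Coloring (Fin k)) (hv : v ∉ A)
    (hcol : #((A.filter (G.Adj v)).image f) < k) :
    ∃ g : (G.restrict ↑(insert v A)).Coloring (Fin k), ∀ w ∈ A, g w = f w := by
  obtain ⟨c, -, hc⟩ :=
    exists_mem_notMem_of_card_lt_card (t := (univ : Finset (Fin k))) (by simpa using hcol)
  have hfresh : ∀ w ∈ A, G.Adj v w → c ≠ f w := fun w hw hvw (hcw : c = f w) =>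
    hc (hcw ▸ mem_image_of_mem f (mem_filter.2 ⟨hw, hvw⟩))
  have hupd : ∀ w ∈ A, Function.update f v c w = f w := fun w hw =>
    Function.update_of_ne (ne_of_mem_of_not_mem hw hv) _ _
  refine ⟨Coloring.mk (Function.update f v c) ?_, hupd⟩
  rintro x y ⟨hxy, hx, hy⟩
  simp only [coe_insert, Set.mem_insert_iff, mem_coe] at hx hy
  rcases hx with rfl | hx <;> rcases hy with rfl | hy
  · exact absurd hxy G.irrefl
  · rw [Function.update_self, hupd y hy]
    exact hfresh y hy hxy
  · rw [Function.update_self, hupd x hx]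
    exact (hfresh x hx hxy.symm).symm
  · rw [hupd x hx, hupd y hy]
    exact f.valid ⟨hxy, hx, hy⟩

lemma colorable_restrict_of_card_filter_adj_lt {A : Finset V} {v : V} (hv : v ∈ A)
    (hvk : #(A.filter (G.Adj v)) < k) (h : (G.restrict ↑(A.erase v)).Colorable k) :
    (G.restrict ↑A).Colorable k := by
  obtain ⟨f⟩ := h
  have hcol : #(((A.erase v).filter (G.Adj v)).image f) < k :=
    card_image_le.trans_lt <|
      (card_le_card (filter_subset_filter _ (erase_subset v A))).trans_lt hvk
  obtain ⟨g, -⟩ := exists_coloring_restrict_insert f (notMem_erase v A) hcol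
  rw [insert_erase hv] at g
  exact ⟨g⟩

variable [Fintype V]

/-- Colouring `S` in increasing order of `r`, each vertex still has an uncoloured neighbour. -/
lemma exists_coloring_restrict_union {P S : Finset V} (f : (G.restrict P).Coloring (Fin k))
    (hPS : Disjoint P S) (r : V → ℕ) (hdeg : ∀ u, G.degree u ≤ k)
    (hlater : ∀ u ∈ S, ∃ w, G.Adj u w ∧ w ∉ P ∧ (w ∈ S → r w < r u)) :
    ∃ g : (G.restrict ↑(P ∪ S)).Coloring (Fin k), ∀ v ∈ P, g v = f v := by
  induction S using Finset.strongInduction with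
  | H S ih =>
  rcases S.eq_empty_or_nonempty with rfl | hS
  · rw [union_empty]
    exact ⟨f, fun _ _ => rfl⟩
  obtain ⟨u, hu, hmin⟩ := S.exists_min_image r hS
  obtain ⟨g₀, hg₀⟩ := ih (S.erase u) (erase_ssubset hu)
    (disjoint_of_subset_right (erase_subset _ _) hPS) fun x hx =>
      (hlater x (mem_of_mem_erase hx)).imp fun _ hw => ⟨hw.1, hw.2.1, hw.2.2 ∘ mem_of_mem_erase⟩
  obtain ⟨w, huw, hwP, hwS⟩ := hlater u hu
  have hw : w ∉ P ∪ S.erase u := by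
    simp only [mem_union, mem_erase, not_or, not_and]
    exact ⟨hwP, fun _ h => (hmin w h).not_gt (hwS h)⟩
  have hcol : #(((P ∪ S.erase u).filter (G.Adj u)).image g₀) < k := calc
    _ ≤ #((P ∪ S.erase u).filter (G.Adj u)) := card_image_le
    _ ≤ #((G.neighborFinset u).erase w) := card_le_card fun x hx => by
        rw [mem_filter] at hx
        exact mem_erase.2 ⟨ne_of_mem_of_not_mem hx.1 hw, (mem_neighborFinset _ _ _).2 hx.2⟩
    _ < k := by
        rw [card_erase_of_mem ((mem_neighborFinset _ _ _).2 huw), card_neighborFinset_eq_degree]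
        have := (G.degree_pos_iff_exists_adj u).2 ⟨w, huw⟩
        have := hdeg u
        omega
  have hu' : u ∉ P ∪ S.erase u := by
    simp [disjoint_right.1 hPS hu]
  obtain ⟨g, hg⟩ := exists_coloring_restrict_insert g₀ hu' hcol
  rw [← insert_erase hu, union_insert]
  exact ⟨g, fun v hv => (hg v (mem_union_left _ hv)).trans (hg₀ v hv)⟩

lemma exists_coloring_restrict_union_erase_of_reachable {P B : Finset V} {b : V}
    (f : (G.restrict P).Coloring (Fin k)) (hPB : Disjoint P B) (hdeg : ∀ v, G.degree v ≤ k)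
    (hreach : ∀ u ∈ B, (G.restrict ↑B).Reachable u b) :
    ∃ g : (G.restrict ↑(P ∪ B.erase b)).Coloring (Fin k), ∀ v ∈ P, g v = f v :=
  exists_coloring_restrict_union f (disjoint_of_subset_right (erase_subset b B) hPB)
    (fun u => (G.restrict B).dist u b) hdeg fun u hu => by
      obtain ⟨hub, huB⟩ := mem_erase.1 hu
      obtain ⟨w, huw, hw⟩ := (hreach u huB).exists_adj_dist_lt hub
      exact ⟨w, huw.1, disjoint_right.1 hPB huw.2.2, fun _ => hw⟩

/-- `b` is coloured last, and its neighbours `a` and `c` have the same colour. -/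
theorem colorable_restrict_of_forall_reachable {A : Finset V} {a b c : V}
    (hdeg : ∀ v, G.degree v ≤ k) (ha : a ∈ A) (hb : b ∈ A) (hc : c ∈ A) (hac : a ≠ c)
    (hnac : ¬G.Adj a c) (hba : G.Adj b a) (hbc : G.Adj b c)
    (hreach : ∀ u ∈ A \ {a, c}, (G.restrict ↑(A \ {a, c})).Reachable u b) :
    (G.restrict A).Colorable k := by
  set B := A \ {a, c} with hB
  have hk : 0 < k := ((G.degree_pos_iff_exists_adj b).2 ⟨a, hba⟩).trans_le (hdeg b)
  let f : (G.restrict ↑({a, c} : Finset V)).Coloring (Fin k) :=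
    Coloring.mk (fun _ => ⟨0, hk⟩) fun {x y} hxy _ => by
      obtain ⟨hxy, hx, hy⟩ := hxy
      simp only [coe_insert, coe_singleton, Set.mem_insert_iff, Set.mem_singleton_iff] at hx hy
      rcases hx with rfl | rfl <;> rcases hy with rfl | rfl
      exacts [G.irrefl hxy, hnac hxy, hnac hxy.symm, G.irrefl hxy]
  obtain ⟨g, hg⟩ := exists_coloring_restrict_union_erase_of_reachable f (by simp [hB]) hdeg hreach
  set N := ({a, c} ∪ B.erase b).filter (G.Adj b)
  have hcN : c ∈ N := by simp [N, hbc]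
  have hgac : g c = g a := by rw [hg a (by simp), hg c (by simp)]; rfl
  have hcol : #(N.image g) < k := calc
    #(N.image g) ≤ #((N.erase c).image g) := card_le_card fun x hx => by
        obtain ⟨y, hy, rfl⟩ := mem_image.1 hx
        obtain rfl | hyc := eq_or_ne y c
        · exact hgac ▸ mem_image_of_mem g (mem_erase.2 ⟨hac, by simp [N, hba]⟩)
        · exact mem_image_of_mem g (mem_erase.2 ⟨hyc, hy⟩)
    _ ≤ #(N.erase c) := card_image_le
    _ < #N := card_erase_lt_of_mem hcN
    _ ≤ #(G.neighborFinset b) := card_le_card fun x hx => by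
        simpa using (mem_filter.1 hx).2
    _ ≤ k := G.card_neighborFinset_eq_degree b ▸ hdeg b
  obtain ⟨g', -⟩ :=
    exists_coloring_restrict_insert g (by simp [G.ne_of_adj hba, G.ne_of_adj hbc]) hcol
  have hA : insert b ({a, c} ∪ B.erase b) = A := by
    ext x
    simp only [hB, mem_insert, mem_union, mem_singleton, mem_erase, mem_sdiff]
    grind
  rw [hA] at g'
  exact ⟨g'⟩

end Greedy

variable [DecidableEq V]

variable (G) in
/-- `T` separates `S` from the rest of `A \ T`. -/
structure IsSeparation (A T S : Finset V) : Prop where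
  sep_subset : T ⊆ A
  nonempty : S.Nonempty
  subset : S ⊆ A \ T
  nonempty_rest : ((A \ T) \ S).Nonempty
  closed : ∀ s ∈ S, ∀ z ∈ A \ T, G.Adj s z → z ∈ S

namespace IsSeparation

variable {A T S : Finset V}

lemma compl (h : G.IsSeparation A T S) : G.IsSeparation A T ((A \ T) \ S) where
  sep_subset := h.sep_subset
  nonempty := h.nonempty_rest
  subset := sdiff_subset
  nonempty_rest := by rw [Finset.sdiff_sdiff_eq_self h.subset]; exact h.nonempty
  closed s hs z hz hsz := mem_sdiff.2
    ⟨hz, fun hzS => (mem_sdiff.1 hs).2 (h.closed z hzS s (mem_sdiff.1 hs).1 hsz.symm)⟩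

lemma erase (h : G.IsSeparation A T S) {t : V} (ht : ∀ s ∈ S, ¬G.Adj t s) :
    G.IsSeparation A (T.erase t) S where
  sep_subset := (erase_subset _ _).trans h.sep_subset
  nonempty := h.nonempty
  subset := h.subset.trans (sdiff_subset_sdiff subset_rfl (erase_subset _ _))
  nonempty_rest := h.nonempty_rest.mono
    (sdiff_subset_sdiff (sdiff_subset_sdiff subset_rfl (erase_subset _ _)) subset_rfl)
  closed s hs z hz hsz := by
    obtain rfl | hzt := eq_or_ne z t
    · exact absurd hsz.symm (ht s hs)
    · simp only [mem_sdiff, mem_erase, not_and] at hz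
      exact h.closed s hs z (mem_sdiff.2 ⟨hz.1, fun hzT => hz.2 hzt hzT⟩) hsz

lemma exists_adj_of_card_lt [DecidableRel G.Adj] (h : G.IsSeparation A T S) {a : V}
    (ha : a ∈ S) (hT : #T < #(A.filter (G.Adj a))) : ∃ s ∈ S, G.Adj a s := by
  by_contra! hno
  refine hT.not_ge (card_le_card fun z hz => ?_)
  obtain ⟨hzA, haz⟩ := mem_filter.1 hz
  by_contra hzT
  exact hno z (h.closed a ha z (mem_sdiff.2 ⟨hzA, hzT⟩) haz) haz

theorem colorable (h : G.IsSeparation A T S) (hT : #T ≤ 1)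
    (ih : ∀ B ⊂ A, (G.restrict ↑B).Colorable k) : (G.restrict ↑A).Colorable k := by
  have : Nonempty V := ⟨h.nonempty.choose⟩
  obtain ⟨v, hv⟩ := card_le_one_iff_subset_singleton.1 hT
  have hS := h.subset
  have hcol := Colorable.restrict_union (s := ↑(A \ ((A \ T) \ S))) (t := ↑(A \ S)) (v := v)
    (fun x ⟨hx₁, hx₂⟩ => by
      have := @hv x
      simp only [coe_sdiff, Set.mem_sdiff, mem_coe, not_and, not_not] at hx₁ hx₂
      simp_all)
    (fun x ⟨hx₁, hx₂⟩ y ⟨hy₁, hy₂⟩ hxy => by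
      simp only [coe_sdiff, Set.mem_sdiff, mem_coe, not_and, not_not] at hx₁ hx₂ hy₁ hy₂
      have hxS : x ∈ S := hx₂ hx₁.1
      have hy : y ∈ (A \ T) \ S := by simp_all
      exact (mem_sdiff.1 hy).2 (h.closed x hxS y (mem_sdiff.1 hy).1 hxy))
    (ih _ (sdiff_ssubset (sdiff_subset.trans sdiff_subset) h.nonempty_rest))
    (ih _ (sdiff_ssubset (hS.trans sdiff_subset) h.nonempty))
  convert hcol using 2
  ext x
  simp only [coe_sdiff, Set.mem_union, Set.mem_sdiff, mem_coe]
  tauto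

end IsSeparation

lemma exists_isSeparation_of_not_reachable {A T : Finset V} {u w : V} (hT : T ⊆ A)
    (hu : u ∈ A \ T) (hw : w ∈ A \ T) (huw : ¬(G.restrict ↑(A \ T)).Reachable u w) :
    ∃ S, G.IsSeparation A T S ∧ u ∈ S ∧ ∀ z ∈ S, (G.restrict ↑(A \ T)).Reachable u z := by
  classical
  have hu' : u ∈ (A \ T).filter ((G.restrict ↑(A \ T)).Reachable u) := mem_filter.2 ⟨hu, .rfl⟩
  refine ⟨_, ⟨hT, ⟨u, hu'⟩, filter_subset _ _, ⟨w, ?_⟩, ?_⟩, hu',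
    fun z hz => (mem_filter.1 hz).2⟩
  · exact mem_sdiff.2 ⟨hw, fun hw' => huw (mem_filter.1 hw').2⟩
  · intro s hs z hz hsz
    obtain ⟨hsA, hus⟩ := mem_filter.1 hs
    exact mem_filter.2 ⟨hz, hus.trans (Adj.reachable ⟨hsz, hsA, hz⟩)⟩

/-- The part of `S` reachable from `p` in `A \ {a, c}` misses `a`, and `q` is not reachable,
so `{p, a}` separates it. -/
lemma exists_isSeparation_ssubset {A S : Finset V} {p q a c s : V}
    (h : G.IsSeparation A {p, q} S) (ha : a ∈ S) (hc : c ∈ (A \ {p, q}) \ S)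
    (hpq : ¬(G.restrict ↑(A \ {a, c})).Reachable p q) (hs : s ∈ S)
    (hps : (G.restrict ↑(A \ {a, c})).Reachable p s) :
    ∃ U ⊂ S, G.IsSeparation A {p, a} U := by
  classical
  set B := A \ {a, c} with hB
  have hpA : p ∈ A := h.sep_subset (mem_insert_self p {q})
  have hqA : q ∈ A := h.sep_subset (by simp)
  have haA := h.subset ha
  have hcA := (mem_sdiff.1 hc).1
  have hcS := (mem_sdiff.1 hc).2
  have hSB : ∀ z ∈ S, (G.restrict ↑B).Reachable p z → z ∈ B := fun z hz hpz =>
    hpz.mem_of_restrict_of_ne fun hpz' => by simpa [← hpz'] using h.subset hz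
  have hqB : q ∈ B := by
    simp only [hB, mem_sdiff, mem_insert, mem_singleton] at haA hcA ⊢
    grind
  set U := S.filter ((G.restrict ↑B).Reachable p)
  have haU : a ∉ U := fun haU => by simpa [hB] using hSB a ha (mem_filter.1 haU).2
  refine ⟨U, (ssubset_iff_of_subset (filter_subset _ S)).2 ⟨a, ha, haU⟩, ?_⟩
  refine ⟨?_, ⟨s, mem_filter.2 ⟨hs, hps⟩⟩, fun z hz => ?_, ⟨c, ?_⟩, fun u hu z hz huz => ?_⟩
  · simp_all [insert_subset_iff]
  · obtain ⟨hzS, hpz⟩ := mem_filter.1 hz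
    have := hSB z hzS hpz
    have := h.subset hzS
    simp_all
  · have : c ≠ a := fun hca => hcS (hca ▸ ha)
    simp_all [U]
  · obtain ⟨huS, hpu⟩ := mem_filter.1 hu
    have huB := hSB u huS hpu
    have hzq : z ≠ q := by
      rintro rfl
      exact hpq (hpu.trans (Adj.reachable ⟨huz, huB, hqB⟩))
    have hzS : z ∈ S := h.closed u huS z (by simp_all) huz
    have hzB : z ∈ B := by
      have : z ≠ c := fun hzc => hcS (hzc ▸ hzS)
      simp_all
    exact mem_filter.2 ⟨hzS, hpu.trans (Adj.reachable ⟨huz, huB, hzB⟩)⟩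

section TwoConnected

variable {A : Finset V} (hA : ∀ T S : Finset V, #T ≤ 1 → ¬G.IsSeparation A T S)
include hA

lemma exists_adj_of_isSeparation_pair {S : Finset V} {x y : V}
    (h : G.IsSeparation A {x, y} S) : ∃ s ∈ S, G.Adj x s := by
  by_contra! hno
  refine hA _ S ?_ (h.erase hno)
  rw [card_erase_of_mem (mem_insert_self x {y})]
  have := card_le_two (a := x) (b := y)
  omega

/-- A component of `A \ {a, c}` avoiding `x` and `y` must touch both `a` and `c`, since neither
is a cut vertex; it would then join `S` to its complement outside `{x, y}`. -/
lemma reachable_or_reachable_of_isSeparation_pair {S : Finset V} {x y a c : V}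
    (h : G.IsSeparation A {x, y} S) (ha : a ∈ S) (hc : c ∈ (A \ {x, y}) \ S) :
    ∀ w ∈ A \ {a, c},
      (G.restrict ↑(A \ {a, c})).Reachable w x ∨ (G.restrict ↑(A \ {a, c})).Reachable w y := by
  intro w hw
  by_contra! hwxy
  obtain ⟨hwx, hwy⟩ := hwxy
  have haA := h.subset ha
  have hcA := (mem_sdiff.1 hc).1
  have hxA : x ∈ A := h.sep_subset (mem_insert_self x {y})
  have hx : x ∈ A \ {a, c} := by
    simp only [mem_sdiff, mem_insert, mem_singleton] at haA hcA ⊢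
    grind
  have hxy : ∀ z, (G.restrict ↑(A \ {a, c})).Reachable w z → z ∈ A → z ∈ A \ {x, y} :=
    fun z hwz hzA => by
      simp only [mem_sdiff, mem_insert, mem_singleton, not_or]
      exact ⟨hzA, fun hzx => hwx (hzx ▸ hwz), fun hzy => hwy (hzy ▸ hwz)⟩
  obtain ⟨R, hR, -, hwR⟩ :=
    exists_isSeparation_of_not_reachable (by simp_all [insert_subset_iff]) hw hx hwx
  have hRxy : ∀ z ∈ R, z ∈ A \ {x, y} := fun z hz =>
    hxy z (hwR z hz) (mem_sdiff.1 (hR.subset hz)).1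
  obtain ⟨r₁, hr₁, har₁⟩ := exists_adj_of_isSeparation_pair hA hR
  obtain ⟨r₂, hr₂, hcr₂⟩ := exists_adj_of_isSeparation_pair hA (pair_comm a c ▸ hR)
  have hr₁S : r₁ ∈ S := h.closed a ha r₁ (hRxy r₁ hr₁) har₁
  have hr₂S : r₂ ∉ S := (mem_sdiff.1 (h.compl.closed c hc r₂ (hRxy r₂ hr₂) hcr₂)).2
  refine hr₂S (((hwR r₁ hr₁).symm.trans (hwR r₂ hr₂)).mem_of_closed (P := ↑S) hr₁S ?_)
  intro s z hr₁s hs (hsz : (G.restrict _).Adj s z)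
  have hwz := (hwR r₁ hr₁).trans (hr₁s.trans hsz.reachable)
  exact h.closed s hs z (hxy z hwz (mem_sdiff.1 hsz.2.2).1) hsz.1

lemma reachable_restrict_of_forall_not_isSeparation :
    ∀ u ∈ A, ∀ w ∈ A, (G.restrict ↑A).Reachable u w := by
  intro u hu w hw
  by_contra huw
  obtain ⟨S, hS, -⟩ := exists_isSeparation_of_not_reachable (empty_subset A)
    (by simpa using hu) (by simpa using hw) (by simpa using huw)
  exact hA ∅ S (by simp) hS

variable [DecidableRel G.Adj] [Fintype V]

/-- Induction on the side `S` stands in for choosing it of least size: either `A \ {a, c}` is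
connected, or a smaller side appears. -/
theorem colorable_restrict_of_isSeparation_pair (hdeg : ∀ v, G.degree v ≤ k)
    (hA3 : ∀ v ∈ A, 3 ≤ #(A.filter (G.Adj v))) {S : Finset V} {x y : V}
    (h : G.IsSeparation A {x, y} S) : (G.restrict ↑A).Colorable k := by
  induction S using Finset.strongInduction generalizing x y with
  | H S ih =>
  obtain ⟨a, ha, hxa⟩ := exists_adj_of_isSeparation_pair hA h
  obtain ⟨c, hc, hxc⟩ := exists_adj_of_isSeparation_pair hA h.compl
  have hreach := reachable_or_reachable_of_isSeparation_pair hA h ha hc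
  have haA := mem_sdiff.1 (h.subset ha)
  have hcA := mem_sdiff.1 (mem_sdiff.1 hc).1
  have hcS := (mem_sdiff.1 hc).2
  by_cases hyx : (G.restrict ↑(A \ {a, c})).Reachable y x
  · refine colorable_restrict_of_forall_reachable hdeg haA.1 (h.sep_subset (by simp)) hcA.1
      (fun hac => hcS (hac ▸ ha)) (fun hac => hcS (h.closed a ha c (mem_sdiff.1 hc).1 hac))
      hxa hxc fun u hu => (hreach u hu).elim id (·.trans hyx)
  · obtain ⟨s, hs, has⟩ := h.exists_adj_of_card_lt ha (card_le_two.trans_lt (hA3 a haA.1))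
    have hsB : s ∈ A \ {a, c} := by
      have := mem_sdiff.1 (h.subset hs)
      have : s ≠ c := fun hsc => hcS (hsc ▸ hs)
      simp_all [(G.ne_of_adj has).symm]
    rcases hreach s hsB with hsx | hsy
    · obtain ⟨U, hUS, hU⟩ :=
        exists_isSeparation_ssubset h ha hc (fun hxy => hyx hxy.symm) hs hsx.symm
      exact ih U hUS hU
    · rw [pair_comm] at h hc
      obtain ⟨U, hUS, hU⟩ := exists_isSeparation_ssubset h ha hc hyx hs hsy.symm
      exact ih U hUS hU

theorem colorable_restrict_of_forall_not_isSeparation (hk : 3 ≤ k)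
    (hdeg : ∀ v, G.degree v ≤ k) (hcf : G.CliqueFree (k + 1))
    (hAk : ∀ v ∈ A, k ≤ #(A.filter (G.Adj v))) (hne : A.Nonempty) :
    (G.restrict ↑A).Colorable k := by
  obtain ⟨v, hv⟩ := hne
  obtain ⟨x, hx, y, hy, hxy, hnxy⟩ := exists_ne_not_adj_of_cliqueFree hcf (A := A) <| by
    calc k + 1 ≤ #(insert v (A.filter (G.Adj v))) := by
          rw [card_insert_of_notMem (by simp)]
          exact Nat.succ_le_succ (hAk v hv)
      _ ≤ #A := card_le_card (insert_subset hv (filter_subset _ _))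
  have hconn := reachable_restrict_of_forall_not_isSeparation hA
  obtain ⟨p, hp⟩ := (hconn x hx y hy).exists_walk_length_eq_dist
  have hdist : 1 < (G.restrict ↑A).dist x y := by
    have h₀ : (G.restrict ↑A).dist x y ≠ 0 :=
      dist_ne_zero_iff_ne_and_reachable.2 ⟨hxy, hconn x hx y hy⟩
    have h₁ : (G.restrict ↑A).dist x y ≠ 1 := fun h => hnxy (dist_eq_one_iff_adj.1 h).1
    omega
  obtain ⟨a, b, c, hab, hbc, hnac, hac⟩ := p.exists_adj_adj_not_adj_ne hp hdist
  have haA : a ∈ A := hab.2.1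
  have hcA : c ∈ A := hbc.2.2
  by_cases hreach : ∀ u ∈ A \ {a, c}, (G.restrict ↑(A \ {a, c})).Reachable u b
  · exact colorable_restrict_of_forall_reachable hdeg haA hab.2.2 hcA hac
      (fun h => hnac ⟨h, haA, hcA⟩) hab.1.symm hbc.1 hreach
  · push Not at hreach
    obtain ⟨u, hu, hub⟩ := hreach
    have hb : b ∈ A \ {a, c} :=
      mem_sdiff.2 ⟨hab.2.2, by simp [(G.ne_of_adj hab.1).symm, G.ne_of_adj hbc.1]⟩
    obtain ⟨S, hS, -⟩ := exists_isSeparation_of_not_reachable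
      (insert_subset haA (singleton_subset_iff.2 hcA)) hu hb hub
    exact colorable_restrict_of_isSeparation_pair hA hdeg (fun v hv => hk.trans (hAk v hv)) hS

end TwoConnected

theorem colorable_restrict_of_cliqueFree [DecidableRel G.Adj] [Fintype V] (hk : 3 ≤ k)
    (hdeg : ∀ v, G.degree v ≤ k) (hcf : G.CliqueFree (k + 1)) (A : Finset V) :
    (G.restrict ↑A).Colorable k := by
  induction A using Finset.strongInduction with
  | H A ih =>
  rcases A.eq_empty_or_nonempty with rfl | hne
  · exact ⟨Coloring.mk (fun _ => ⟨0, by omega⟩) fun h => by simp at h⟩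
  by_cases hlow : ∃ v ∈ A, #(A.filter (G.Adj v)) < k
  · obtain ⟨v, hv, hvk⟩ := hlow
    exact colorable_restrict_of_card_filter_adj_lt hv hvk (ih _ (erase_ssubset hv))
  by_cases hsep : ∃ T S, #T ≤ 1 ∧ G.IsSeparation A T S
  · obtain ⟨T, S, hT, h⟩ := hsep
    exact h.colorable hT ih
  push Not at hlow hsep
  exact colorable_restrict_of_forall_not_isSeparation hsep hk hdeg hcf hlow hne

end SimpleGraph

/-- Brooks' Theorem for Independence Number: if `Δ(G) ≥ 3` and `G` has no clique on
`Δ(G) + 1` vertices, then `Δ(G) · α(G) ≥ |G|`. -/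
theorem brooks_independence_number {V : Type*} [Fintype V] [DecidableEq V]
    (G : SimpleGraph V) [DecidableRel G.Adj]
    (hΔ : 3 ≤ G.maxDegree) (hclique : G.CliqueFree (G.maxDegree + 1)) :
    Fintype.card V ≤ G.maxDegree * _root_.indepNum G := by
  have hcol := colorable_restrict_of_cliqueFree hΔ G.degree_le_maxDegree hclique univ
  rw [coe_univ, restrict_univ] at hcol
  obtain ⟨f⟩ := hcol
  have hclass : ∀ i, #(univ.filter fun v => f v = i) ≤ _root_.indepNum G := fun i =>
    le_sup <| mem_filter.2 ⟨mem_univ _, fun u hu w hw huw =>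
      f.valid huw ((mem_filter.1 hu).2.trans (mem_filter.1 hw).2.symm)⟩
  calc Fintype.card V = #(univ : Finset V) := card_univ.symm
    _ ≤ _root_.indepNum G * #(univ : Finset (Fin G.maxDegree)) :=
      card_le_mul_card_image_of_maps_to (fun v _ => mem_univ (f v)) _ fun i _ => hclass i
    _ = G.maxDegree * _root_.indepNum G := by rw [card_univ, Fintype.card_fin, mul_comm]
end

section
/- Let G=(V,E) be a finite simple graph, A ⊆ V an independent set, and B := V∖A. Let D be any digraph on V such that: (i) for every edge uv of G with u,v ∈ B, both (u,v) ∈ D and (v,u) ∈ D; (ii) for every edge of G between A and B, exactly one of the two orientations of that edge is in D; and (iii) D contains no other arcs (in particular no arcs between vertices of A and no loops). Then D is kernel-perfect. -/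
open SimpleGraph

/-- The induced subdigraph of `D` on `S` has a kernel: a `D`-independent set `I ⊆ S` such
that every vertex of `S` outside `I` sends an arc into `I`. -/
def HasKernelOn {V : Type*} (D : V → V → Prop) (S : Set V) : Prop :=
  ∃ I : Set V, I ⊆ S ∧
    (∀ u ∈ I, ∀ v ∈ I, u ≠ v → ¬ D u v) ∧
    ∀ v ∈ S, v ∉ I → ∃ u ∈ I, D v u

/-- A digraph `D` is kernel-perfect if every induced subdigraph has a kernel. -/
def KernelPerfect {V : Type*} (D : V → V → Prop) : Prop :=
  ∀ S : Set V, HasKernelOn D S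

/-- Kostochka–Yancey: let `A` be an independent set in a graph `G` and `B = V ∖ A`.
Any digraph obtained from `G` by replacing each edge inside `B` by a pair of opposite
arcs and orienting each edge between `A` and `B` arbitrarily (and having no other arcs)
is kernel-perfect. -/
theorem kernel_perfect_of_indep {V : Type*} [Fintype V] (G : SimpleGraph V)
    (A : Set V) (hA : ∀ u ∈ A, ∀ v ∈ A, ¬ G.Adj u v)
    (D : V → V → Prop)
    (hBB : ∀ u v, u ∉ A → v ∉ A → G.Adj u v → D u v ∧ D v u)
    (hAB : ∀ u v, u ∈ A → v ∉ A → G.Adj u v → Xor' (D u v) (D v u))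
    (honly : ∀ u v, D u v → G.Adj u v) :
    KernelPerfect D := by
  classical
  -- no arcs between two vertices of `A`
  have hAA : ∀ u ∈ A, ∀ v ∈ A, ¬ D u v := fun u hu v hv h => hA u hu v hv (honly u v h)
  -- Every nonempty set has a nonempty semikernel.
  have semi : ∀ S : Set V, S.Nonempty → ∃ I : Set V, I.Nonempty ∧ I ⊆ S ∧
      (∀ u ∈ I, ∀ v ∈ I, ¬ D u v) ∧
      (∀ z ∈ S, z ∉ I → (∃ u ∈ I, D u z) → ∃ w ∈ I, D z w) := by
    intro S hS
    by_cases h1 : ∃ v ∈ S, ∀ z ∈ S, ¬ D v z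
    · -- a sink: its singleton is a semikernel
      obtain ⟨v, hv, hvz⟩ := h1
      refine ⟨{v}, ⟨v, rfl⟩, by simpa using hv, ?_, ?_⟩
      · rintro u rfl w rfl h
        exact (honly _ _ h).ne rfl
      · rintro z hz hzv ⟨u, rfl, hDuz⟩
        exact absurd hDuz (hvz z hz)
    by_cases h2 : ∃ b ∈ S, b ∉ A ∧ ∀ z ∈ S, z ∈ A → ¬ D b z
    · -- a B-vertex with no out-arc into A: its singleton is a semikernel
      obtain ⟨b, hb, hbA, hbz⟩ := h2
      refine ⟨{b}, ⟨b, rfl⟩, by simpa using hb, ?_, ?_⟩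
      · rintro u rfl w rfl h
        exact (honly _ _ h).ne rfl
      · rintro z hz hzb ⟨u, rfl, hDuz⟩
        have hzA : z ∉ A := fun hzA => hbz z hz hzA hDuz
        exact ⟨u, rfl, (hBB u z hbA hzA (honly u z hDuz)).2⟩
    · -- hard case: each B-vertex of S has an out-arc into A ∩ S
      push_neg at h1 h2
      have h2' : ∀ b, ∃ a, b ∈ S → b ∉ A → a ∈ S ∧ a ∈ A ∧ D b a := by
        intro b
        by_cases hb : b ∈ S ∧ b ∉ A
        · obtain ⟨a, haS, haA, haD⟩ := h2 b hb.1 hb.2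
          exact ⟨a, fun _ _ => ⟨haS, haA, haD⟩⟩
        · exact ⟨b, fun hbS hbA => absurd ⟨hbS, hbA⟩ hb⟩
      choose g hg using h2'
      -- there is a B-vertex in S
      have hBne : ∃ b ∈ S, b ∉ A := by
        by_contra hall
        push_neg at hall
        obtain ⟨v, hv⟩ := hS
        obtain ⟨z, hzS, hzD⟩ := h1 v hv
        exact hAA v (hall v hv) z (hall z hzS) hzD
      obtain ⟨b₀, hb₀S, hb₀A⟩ := hBne
      refine ⟨{a | ∃ b ∈ S, b ∉ A ∧ g b = a}, ⟨g b₀, b₀, hb₀S, hb₀A, rfl⟩, ?_, ?_, ?_⟩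
      · rintro a ⟨b, hbS, hbA, rfl⟩
        exact (hg b hbS hbA).1
      · rintro u ⟨b, hbS, hbA, rfl⟩ v ⟨c, hcS, hcA, rfl⟩
        exact hAA _ (hg b hbS hbA).2.1 _ (hg c hcS hcA).2.1
      · rintro z hzS hzI ⟨u, ⟨b, hbS, hbA, rfl⟩, hDuz⟩
        have huA : g b ∈ A := (hg b hbS hbA).2.1
        have hzA : z ∉ A := fun hzA => hAA _ huA z hzA hDuz
        exact ⟨g z, ⟨z, hzS, hzA, rfl⟩, (hg z hzS hzA).2.2⟩
  -- Neumann–Lara induction: semikernels in all induced subdigraphs give kernels.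
  have key : ∀ n : ℕ, ∀ S : Set V, S.ncard ≤ n → HasKernelOn D S := by
    intro n
    induction n with
    | zero =>
      intro S hS
      have : S = ∅ := Set.ncard_eq_zero (S.toFinite) |>.mp (Nat.le_zero.mp hS)
      subst this
      exact ⟨∅, Set.Subset.rfl, by simp, by simp⟩
    | succ n ih =>
      intro S hS
      rcases S.eq_empty_or_nonempty with rfl | hne
      · exact ⟨∅, Set.Subset.rfl, by simp, by simp⟩
      obtain ⟨I₀, hI₀ne, hI₀S, hI₀ind, hI₀semi⟩ := semi S hne
      set S' : Set V := {v | v ∈ S ∧ v ∉ I₀ ∧ ∀ u ∈ I₀, ¬ D u v ∧ ¬ D v u} with hS'def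
      have hS'sub : S' ⊆ S := fun v hv => hv.1
      have hS'lt : S'.ncard < S.ncard := by
        obtain ⟨x, hx⟩ := hI₀ne
        refine Set.ncard_lt_ncard ⟨hS'sub, fun hsub => ?_⟩ S.toFinite
        exact (hsub (hI₀S hx)).2.1 hx
      obtain ⟨K', hK'sub, hK'ind, hK'dom⟩ := ih S' (by omega)
      refine ⟨K' ∪ I₀, ?_, ?_, ?_⟩
      · exact Set.union_subset (hK'sub.trans hS'sub) hI₀S
      · rintro u (hu | hu) v (hv | hv) hne'
        · exact hK'ind u hu v hv hne'
        · exact ((hK'sub hu).2.2 v hv).2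
        · exact fun h => ((hK'sub hv).2.2 u hu).1 h
        · exact fun h => hI₀ind u hu v hv h
      · intro v hvS hvK
        by_cases hvS' : v ∈ S'
        · obtain ⟨u, hu, hDu⟩ := hK'dom v hvS' (fun h => hvK (Or.inl h))
          exact ⟨u, Or.inl hu, hDu⟩
        · have hvI₀ : v ∉ I₀ := fun h => hvK (Or.inr h)
          have : ∃ u ∈ I₀, D u v ∨ D v u := by
            by_contra hcon
            push_neg at hcon
            exact hvS' ⟨hvS, hvI₀, hcon⟩
          obtain ⟨u, hu, hD⟩ := this
          rcases hD with hD | hD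
          · obtain ⟨w, hw, hDw⟩ := hI₀semi v hvS hvI₀ ⟨u, hu, hD⟩
            exact ⟨w, Or.inr hw, hDw⟩
          · exact ⟨u, Or.inr hu, hD⟩
  intro S
  exact key S.ncard S le_rfl
end

section
/- Let G be a connected finite simple graph and let H be a nonempty connected induced subgraph of G. Then mic(G) ≥ mic(H) + (|G| − |H|), where mic(H) is computed with respect to the degrees in H. In particular, every nonempty connected finite simple graph G satisfies mic(G) ≥ |G| − 1. -/
open SimpleGraph Finset

/-- The maximum independent cover number of `G`: the maximum of `∑_{v ∈ I} d_G(v)` over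
all independent sets `I` of `G`. -/
def mic {V : Type*} [Fintype V] [DecidableEq V] (G : SimpleGraph V)
    [DecidableRel G.Adj] : ℕ :=
  ((Finset.univ : Finset (Finset V)).filter fun I => ∀ u ∈ I, ∀ v ∈ I, ¬ G.Adj u v).sup
    fun I => ∑ v ∈ I, G.degree v

/-- The degree of `v` in the subgraph of `G` induced on `s`. -/
def degIn {V : Type*} [DecidableEq V] (G : SimpleGraph V) [DecidableRel G.Adj]
    (s : Finset V) (v : V) : ℕ :=
  (s.filter fun u => G.Adj v u).card

/-- The maximum independent cover number of the subgraph of `G` induced on `s`, computed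
with respect to degrees in that induced subgraph. -/
def micOn {V : Type*} [Fintype V] [DecidableEq V] (G : SimpleGraph V)
    [DecidableRel G.Adj] (s : Finset V) : ℕ :=
  (s.powerset.filter fun I => ∀ u ∈ I, ∀ v ∈ I, ¬ G.Adj u v).sup
    fun I => ∑ v ∈ I, degIn G s v

/-!
Adding to `s` a vertex `w` adjacent to `s` raises `micOn` by at least one. Take an optimal
independent set `I` of `G[s]`: if some vertex of `I` is adjacent to `w`, its degree grows by
one; otherwise `I ∪ {w}` is independent and `w` has positive degree in `G[s ∪ {w}]`. Since
`G` is connected, `|V| - |s|` such additions lead from `s` to all of `V`.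
-/

theorem SimpleGraph.Preconnected.exists_adj_mem_notMem {V : Type*} {G : SimpleGraph V}
    (hG : G.Preconnected) {s : Set V} {a b : V} (ha : a ∈ s) (hb : b ∉ s) :
    ∃ u ∈ s, ∃ w ∉ s, G.Adj u w := by
  obtain ⟨p⟩ := hG a b
  obtain ⟨d, -, hd₁, hd₂⟩ := p.exists_boundary_dart s ha hb
  exact ⟨d.fst, hd₁, d.snd, hd₂, d.adj⟩

section MicOn

variable {V : Type*} [DecidableEq V] (G : SimpleGraph V) [DecidableRel G.Adj]

theorem degIn_insert_of_notMem {s : Finset V} {w : V} (hw : w ∉ s) (v : V) :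
    degIn G (insert w s) v = degIn G s v + if G.Adj v w then 1 else 0 := by
  unfold degIn
  rw [filter_insert]
  split_ifs with h
  · rw [card_insert_of_notMem (by simp [hw])]
  · rfl

theorem degIn_pos {s : Finset V} {u v : V} (hu : u ∈ s) (huv : G.Adj v u) : 0 < degIn G s v :=
  card_pos.2 ⟨u, mem_filter.2 ⟨hu, huv⟩⟩

variable [Fintype V]

theorem sum_degIn_le_micOn {s I : Finset V} (hIs : I ⊆ s)
    (hI : ∀ u ∈ I, ∀ v ∈ I, ¬ G.Adj u v) :
    ∑ v ∈ I, degIn G s v ≤ micOn G s :=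
  le_sup (f := fun I => ∑ v ∈ I, degIn G s v) (mem_filter.2 ⟨mem_powerset.2 hIs, hI⟩)

theorem exists_sum_degIn_eq_micOn (s : Finset V) :
    ∃ I ⊆ s, (∀ u ∈ I, ∀ v ∈ I, ¬ G.Adj u v) ∧ ∑ v ∈ I, degIn G s v = micOn G s := by
  obtain ⟨I, hI, hmax⟩ := exists_mem_eq_sup
    (s.powerset.filter fun I => ∀ u ∈ I, ∀ v ∈ I, ¬ G.Adj u v) ⟨∅, by simp⟩
    (fun I => ∑ v ∈ I, degIn G s v)
  rw [mem_filter, mem_powerset] at hI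
  exact ⟨I, hI.1, hI.2, hmax.symm⟩

theorem micOn_add_one_le_micOn_insert {s : Finset V} {u w : V} (hu : u ∈ s) (hw : w ∉ s)
    (huw : G.Adj u w) : micOn G s + 1 ≤ micOn G (insert w s) := by
  obtain ⟨I, hIs, hI, hmax⟩ := exists_sum_degIn_eq_micOn G s
  have hsum : ∀ J : Finset V, ∑ v ∈ J, degIn G (insert w s) v
      = ∑ v ∈ J, degIn G s v + #{v ∈ J | G.Adj v w} := fun J => by
    rw [card_filter, ← sum_add_distrib]
    exact sum_congr rfl fun v _ => degIn_insert_of_notMem G hw v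
  by_cases hIw : ∃ x ∈ I, G.Adj x w
  · obtain ⟨x, hx, hxw⟩ := hIw
    have hgrow : 0 < #{v ∈ I | G.Adj v w} := card_pos.2 ⟨x, mem_filter.2 ⟨hx, hxw⟩⟩
    have hle := sum_degIn_le_micOn G (hIs.trans (subset_insert w s)) hI
    rw [hsum, hmax] at hle
    omega
  · push Not at hIw
    have hwI : w ∉ I := fun h => hw (hIs h)
    have hIw_indep : ∀ a ∈ insert w I, ∀ b ∈ insert w I, ¬ G.Adj a b := by
      simp only [mem_insert]
      rintro a (rfl | ha) b (rfl | hb)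
      · exact G.irrefl
      · exact fun h => hIw b hb h.symm
      · exact hIw a ha
      · exact hI a ha b hb
    have hle := sum_degIn_le_micOn G (insert_subset_insert w hIs) hIw_indep
    have hdeg := degIn_pos G (mem_insert_of_mem (s := s) (b := w) hu) huw.symm
    rw [sum_insert hwI, hsum, hmax, filter_false_of_mem hIw] at hle
    simp only [card_empty] at hle
    omega

theorem micOn_add_card_compl_le_micOn_univ (hG : G.Connected) {s : Finset V}
    (hs : s.Nonempty) : micOn G s + #sᶜ ≤ micOn G univ := by
  induction hk : #sᶜ generalizing s with
  | zero =>
    rw [card_eq_zero, compl_eq_empty_iff] at hk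
    simp [hk]
  | succ k ih =>
    obtain ⟨a, ha⟩ := hs
    obtain ⟨b, hb⟩ : ∃ b, b ∈ sᶜ := card_pos.1 (by omega)
    obtain ⟨u, hu, w, hw, huw⟩ :=
      hG.preconnected.exists_adj_mem_notMem (s := (s : Set V)) ha (mem_compl.1 hb)
    have hstep := micOn_add_one_le_micOn_insert G hu hw huw
    have hrest := ih (insert_nonempty w s) (by
      rw [compl_insert, card_erase_of_mem (mem_compl.2 hw), hk, Nat.add_sub_cancel])
    omega

theorem mic_eq_micOn_univ : mic G = micOn G univ := by
  unfold mic micOn degIn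
  rw [powerset_univ]
  congr 1
  funext I
  refine sum_congr rfl fun v _ => ?_
  rw [← card_neighborFinset_eq_degree]
  congr 1
  ext u
  simp

theorem micOn_add_card_sub_card_le_mic (hG : G.Connected) {s : Finset V} (hs : s.Nonempty) :
    micOn G s + (Fintype.card V - #s) ≤ mic G := by
  rw [mic_eq_micOn_univ, ← card_compl]
  exact micOn_add_card_compl_le_micOn_univ G hG hs

end MicOn

theorem mic_ge_of_connected_induced_general {V : Type*} [Fintype V] [DecidableEq V]
    (G : SimpleGraph V) [DecidableRel G.Adj] (hG : G.Connected)
    (s : Finset V) (hs : s.Nonempty) :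
    micOn G s + (Fintype.card V - s.card) ≤ mic G ∧
      Fintype.card V - 1 ≤ mic G := by
  refine ⟨micOn_add_card_sub_card_le_mic G hG hs, ?_⟩
  obtain ⟨a, -⟩ := hs
  have := micOn_add_card_sub_card_le_mic G hG (singleton_nonempty a)
  rw [card_singleton] at this
  omega

/-- If `G` is connected and `H` is a nonempty connected induced subgraph of `G` (on the
vertex set `s`), then `mic(G) ≥ mic(H) + (|G| - |H|)`. In particular (second conjunct),
`mic(G) ≥ |G| - 1` for every nonempty connected graph `G`. -/
theorem mic_ge_of_connected_induced {V : Type*} [Fintype V] [DecidableEq V]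
    (G : SimpleGraph V) [DecidableRel G.Adj] (hG : G.Connected)
    (s : Finset V) (hs : s.Nonempty) (hconn : (G.induce (s : Set V)).Connected) :
    micOn G s + (Fintype.card V - s.card) ≤ mic G ∧
      Fintype.card V - 1 ≤ mic G :=
  mic_ge_of_connected_induced_general G hG s hs
end

section
/- A connected finite simple graph G with at least one vertex is d₀-KP if and only if some nonempty induced subgraph of G is d₀-KP. -/
open SimpleGraph Finset

/-- A graph `H` is `d₀`-KP if there is a kernel-perfect digraph `D` on `V(H)` such that
every edge of `H` carries at least one arc of `D` and `d_H(v) > d⁺_D(v)` for every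
vertex `v`. -/
def IsD0KP {V : Type*} [Fintype V] (H : SimpleGraph V) : Prop :=
  ∃ D : V → V → Prop, (∀ v, ¬ D v v) ∧ KernelPerfect D ∧
    (∀ u v, H.Adj u v → D u v ∨ D v u) ∧
    ∀ v : V, Set.ncard {u | D v u} < Set.ncard {u | H.Adj v u}
/-!
If `G[s]` is d₀-KP via `D`, fix `a ∈ s` and for every `v ∉ s` a neighbour `p v` closer to `a`
(connectivity). Extend `D` to `G` by keeping `D` inside `s` and putting every other edge in
both directions, except that no vertex `v ∉ s` points to `p v`. A vertex outside `s` loses one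
out-arc; a vertex in `s` gains its neighbours outside `s` on both sides of the degree inequality.
For a kernel on `T`, first choose greedily, in order of decreasing distance to `a`, an independent
set `J ⊆ T \ s`: every other vertex of `T \ s` has a neighbour in `J` that is not closer to `a`,
hence is not its parent. Then add a `D`-kernel of the vertices of `T ∩ s` without neighbours in
`J`. Conversely, `G` is its own induced subgraph on `V`.
-/

theorem kernelPerfect_of_wellFounded_flip {V : Type*} {D : V → V → Prop}
    (hD : WellFounded (flip D)) : KernelPerfect D := by
  intro S
  let inKernel : V → Prop := hD.fix fun v rec => v ∈ S ∧ ∀ u (hvu : D v u), ¬ rec u hvu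
  have inKernel_iff (v : V) : inKernel v ↔ v ∈ S ∧ ∀ u, D v u → ¬ inKernel u :=
    Iff.of_eq (hD.fix_eq _ v)
  refine ⟨{v | inKernel v}, fun v hv => ((inKernel_iff v).1 hv).1, ?_, ?_⟩
  · intro u hu v hv _ huv
    exact ((inKernel_iff u).1 hu).2 v huv hv
  · intro v hvS hvI
    by_contra! h
    exact hvI ((inKernel_iff v).2 ⟨hvS, fun u hvu hu => h u hu hvu⟩)

theorem KernelPerfect.comap {V W : Type*} {D : W → W → Prop} (hD : KernelPerfect D)
    {f : V → W} (hf : Function.Injective f) : KernelPerfect fun a b => D (f a) (f b) := by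
  intro S
  obtain ⟨I, hIS, hIind, hIdom⟩ := hD (f '' S)
  refine ⟨f ⁻¹' I, fun v hv => ?_, fun u hu v hv huv => hIind _ hu _ hv (hf.ne huv), ?_⟩
  · obtain ⟨w, hw, hwv⟩ := hIS hv
    exact hf hwv ▸ hw
  · intro v hvS hvI
    obtain ⟨u, huI, hvu⟩ := hIdom (f v) ⟨v, hvS, rfl⟩ hvI
    obtain ⟨w, -, rfl⟩ := hIS huI
    exact ⟨w, huI, hvu⟩

theorem IsD0KP.of_iso {V W : Type*} [Fintype V] [Fintype W] {G : SimpleGraph V}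
    {H : SimpleGraph W} (e : G ≃g H) (h : IsD0KP H) : IsD0KP G := by
  obtain ⟨D, hirr, hkp, hcov, hdeg⟩ := h
  refine ⟨fun a b => D (e a) (e b), fun v => hirr (e v), hkp.comap e.injective,
    fun a b hab => hcov _ _ (e.map_adj_iff.2 hab), fun v => ?_⟩
  have hrange (t : Set W) : t ⊆ Set.range e := e.surjective.range_eq ▸ Set.subset_univ t
  calc {u | D (e v) (e u)}.ncard
      = (e ⁻¹' {u | D (e v) u}).ncard := rfl
    _ = {u | D (e v) u}.ncard :=
      Set.ncard_preimage_of_injective_subset_range e.injective (hrange _)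
    _ < {u | H.Adj (e v) u}.ncard := hdeg (e v)
    _ = (e ⁻¹' {u | H.Adj (e v) u}).ncard :=
      (Set.ncard_preimage_of_injective_subset_range e.injective (hrange _)).symm
    _ = {u | G.Adj v u}.ncard := congrArg Set.ncard (Set.ext fun _ => e.map_adj_iff)

namespace SimpleGraph

variable {V : Type*} {G : SimpleGraph V}

theorem _root_.Set.ncard_preimage_val_add_ncard_sdiff [Finite V] (s X : Set V) :
    (Subtype.val ⁻¹' X : Set s).ncard + (X \ s).ncard = X.ncard := by
  rw [← Set.ncard_image_of_injective _ Subtype.val_injective, Subtype.image_preimage_coe,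
    Set.inter_comm, Set.ncard_inter_add_ncard_sdiff_eq_ncard]

theorem exists_isIndepSet_forall_exists_adj_le [Finite V] (G : SimpleGraph V) (rk : V → ℕ)
    (W : Set V) : ∃ I ⊆ W, G.IsIndepSet I ∧
      ∀ v ∈ W, v ∉ I → ∃ u ∈ I, G.Adj v u ∧ rk v ≤ rk u := by
  obtain ⟨e, he⟩ := Countable.exists_injective_nat V
  let key : V → ℕ ×ₗ ℕ := fun v => toLex (rk v, e v)
  have hkey : Function.Injective key := fun u v huv => he (congrArg (fun x => (ofLex x).2) huv)
  have hwf : WellFounded (flip fun v u => G.Adj v u ∧ key v < key u) :=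
    Subrelation.wf (fun h => h.2)
      (Set.wellFoundedOn_range.1 ((Set.finite_range key).wellFoundedOn (r := (· > ·))))
  obtain ⟨I, hIW, hIind, hIdom⟩ := kernelPerfect_of_wellFounded_flip hwf W
  refine ⟨I, hIW, fun u hu v hv huv hadj => ?_, fun v hv hvI => ?_⟩
  · rcases lt_or_gt_of_ne (hkey.ne huv) with h | h
    · exact hIind u hu v hv huv ⟨hadj, h⟩
    · exact hIind v hv u hu huv.symm ⟨hadj.symm, h⟩
  · obtain ⟨u, hu, hadj, hlt⟩ := hIdom v hv hvI
    refine ⟨u, hu, hadj, ?_⟩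
    rcases Prod.Lex.toLex_lt_toLex.1 hlt with h | h
    exacts [h.le, h.1.le]

theorem Connected.exists_adj_dist_lt (hG : G.Connected) {v a : V} (hne : v ≠ a) :
    ∃ w, G.Adj v w ∧ G.dist w a < G.dist v a := by
  obtain ⟨q, hq⟩ := hG.exists_walk_length_eq_dist v a
  cases q with
  | nil => exact absurd rfl hne
  | @cons _ w _ hadj q =>
    refine ⟨w, hadj, ?_⟩
    have := dist_le q
    rw [Walk.length_cons] at hq
    omega

end SimpleGraph

section Extension

variable {V : Type*} {G : SimpleGraph V} {s : Set V} {D : s → s → Prop} {p : V → V}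

variable (G s D p) in
open Classical in
def extendDigraph (a b : V) : Prop :=
  if h : a ∈ s ∧ b ∈ s then D ⟨a, h.1⟩ ⟨b, h.2⟩ else G.Adj a b ∧ (a ∉ s → b ≠ p a)

theorem extendDigraph_of_mem {a b : V} (ha : a ∈ s) (hb : b ∈ s) :
    extendDigraph G s D p a b ↔ D ⟨a, ha⟩ ⟨b, hb⟩ :=
  Iff.of_eq (dif_pos ⟨ha, hb⟩)

theorem extendDigraph_of_mem_of_notMem {a b : V} (ha : a ∈ s) (hb : b ∉ s) :
    extendDigraph G s D p a b ↔ G.Adj a b := by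
  simp [extendDigraph, ha, hb]

theorem extendDigraph_of_notMem {a b : V} (ha : a ∉ s) :
    extendDigraph G s D p a b ↔ G.Adj a b ∧ b ≠ p a := by
  simp [extendDigraph, ha]

theorem extendDigraph_irrefl (hD : ∀ x, ¬ D x x) (v : V) : ¬ extendDigraph G s D p v v := by
  by_cases hv : v ∈ s
  · exact mt (extendDigraph_of_mem hv hv).1 (hD _)
  · exact fun h => G.loopless.irrefl v ((extendDigraph_of_notMem hv).1 h).1

theorem extendDigraph_or_of_adj (hD : ∀ x y, (G.induce s).Adj x y → D x y ∨ D y x)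
    {rk : V → ℕ} (hrk : ∀ v ∉ s, rk (p v) < rk v) {u v : V} (huv : G.Adj u v) :
    extendDigraph G s D p u v ∨ extendDigraph G s D p v u := by
  by_cases hu : u ∈ s <;> by_cases hv : v ∈ s
  · exact (hD ⟨u, hu⟩ ⟨v, hv⟩ huv).imp (extendDigraph_of_mem hu hv).2
      (extendDigraph_of_mem hv hu).2
  · exact Or.inl ((extendDigraph_of_mem_of_notMem hu hv).2 huv)
  · exact Or.inr ((extendDigraph_of_mem_of_notMem hv hu).2 huv.symm)
  · by_cases hvp : v = p u
    · subst hvp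
      exact Or.inr ((extendDigraph_of_notMem hv).2
        ⟨huv.symm, fun hu' => (hrk u hu).asymm (by simpa only [← hu'] using hrk _ hv)⟩)
    · exact Or.inl ((extendDigraph_of_notMem hu).2 ⟨huv, hvp⟩)

theorem ncard_extendDigraph_lt_of_mem [Finite V] {v : V} (hv : v ∈ s)
    (hdeg : {y | D ⟨v, hv⟩ y}.ncard < {y | (G.induce s).Adj ⟨v, hv⟩ y}.ncard) :
    {u | extendDigraph G s D p v u}.ncard < {u | G.Adj v u}.ncard := by
  have hin : (Subtype.val ⁻¹' {u | extendDigraph G s D p v u} : Set s) = {y | D ⟨v, hv⟩ y} :=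
    Set.ext fun y => extendDigraph_of_mem hv y.2
  have hout : {u | extendDigraph G s D p v u} \ s = {u | G.Adj v u} \ s :=
    Set.ext fun u => and_congr_left (extendDigraph_of_mem_of_notMem hv)
  rw [← Set.ncard_preimage_val_add_ncard_sdiff s,
    ← Set.ncard_preimage_val_add_ncard_sdiff s {u | G.Adj v u}, hin, hout]
  exact Nat.add_lt_add_right hdeg _

theorem ncard_extendDigraph_lt_of_notMem [Finite V] {v : V} (hv : v ∉ s) (hp : G.Adj v (p v)) :
    {u | extendDigraph G s D p v u}.ncard < {u | G.Adj v u}.ncard := by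
  have : {u | extendDigraph G s D p v u} = {u | G.Adj v u} \ {p v} :=
    Set.ext fun u => extendDigraph_of_notMem hv
  rw [this]
  exact Set.ncard_sdiff_singleton_lt_of_mem hp

theorem KernelPerfect.extendDigraph [Finite V] (hD : KernelPerfect D) {rk : V → ℕ}
    (hrk : ∀ v ∉ s, rk (p v) < rk v) : KernelPerfect (extendDigraph G s D p) := by
  intro T
  obtain ⟨J, hJT, hJind, hJdom⟩ := G.exists_isIndepSet_forall_exists_adj_le rk (T \ s)
  obtain ⟨I, hIS, hIind, hIdom⟩ := hD {x | ↑x ∈ T ∧ ∀ u ∈ J, ¬ G.Adj x u}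
  refine ⟨Subtype.val '' I ∪ J, ?_, ?_, ?_⟩
  · rintro v (⟨x, hx, rfl⟩ | hv)
    exacts [(hIS hx).1, (hJT hv).1]
  · rintro u (⟨x, hx, rfl⟩ | hu) v (⟨y, hy, rfl⟩ | hv) hne huv
    · exact hIind x hx y hy (ne_of_apply_ne _ hne) ((extendDigraph_of_mem x.2 y.2).1 huv)
    · exact (hIS hx).2 v hv ((extendDigraph_of_mem_of_notMem x.2 (hJT hv).2).1 huv)
    · exact (hIS hy).2 u hu ((extendDigraph_of_notMem (hJT hu).2).1 huv).1.symm
    · exact hJind hu hv hne ((extendDigraph_of_notMem (hJT hu).2).1 huv).1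
  · intro v hvT hvI
    by_cases hvs : v ∈ s
    · by_cases hvJ : ∃ u ∈ J, G.Adj v u
      · obtain ⟨u, hu, hvu⟩ := hvJ
        exact ⟨u, Or.inr hu, (extendDigraph_of_mem_of_notMem hvs (hJT hu).2).2 hvu⟩
      · push Not at hvJ
        obtain ⟨y, hy, hvy⟩ := hIdom ⟨v, hvs⟩ ⟨hvT, hvJ⟩ fun hv => hvI (Or.inl ⟨_, hv, rfl⟩)
        exact ⟨y, Or.inl ⟨y, hy, rfl⟩, (extendDigraph_of_mem hvs y.2).2 hvy⟩
    · obtain ⟨u, hu, hvu, hrkvu⟩ := hJdom v ⟨hvT, hvs⟩ fun hv => hvI (Or.inr hv)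
      refine ⟨u, Or.inr hu, (extendDigraph_of_notMem hvs).2 ⟨hvu, ?_⟩⟩
      rintro rfl
      exact (hrk v hvs).not_ge hrkvu

end Extension

theorem IsD0KP.of_induce {V : Type*} [Fintype V] {G : SimpleGraph V} (hG : G.Connected)
    {s : Set V} [Fintype s] (hs : s.Nonempty) (h : IsD0KP (G.induce s)) : IsD0KP G := by
  obtain ⟨D, hirr, hkp, hcov, hdeg⟩ := h
  obtain ⟨a, ha⟩ := hs
  have hparent (v : V) (hv : v ∉ s) : ∃ w, G.Adj v w ∧ G.dist w a < G.dist v a :=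
    hG.exists_adj_dist_lt (ne_of_mem_of_not_mem ha hv).symm
  choose! p hp using hparent
  refine ⟨extendDigraph G s D p, extendDigraph_irrefl hirr,
    hkp.extendDigraph (rk := (G.dist · a)) fun v hv => (hp v hv).2,
    fun u v => extendDigraph_or_of_adj hcov (rk := (G.dist · a)) fun v hv => (hp v hv).2,
    fun v => ?_⟩
  by_cases hv : v ∈ s
  · exact ncard_extendDigraph_lt_of_mem hv (hdeg ⟨v, hv⟩)
  · exact ncard_extendDigraph_lt_of_notMem hv (hp v hv).1

theorem d0KP_iff_induced_general {V : Type*} [Fintype V] [Nonempty V]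
    (G : SimpleGraph V) (hconn : G.Connected) :
    IsD0KP G ↔ ∃ s : Finset V, s.Nonempty ∧ IsD0KP (G.induce (s : Set V)) := by
  refine ⟨fun h => ⟨Finset.univ, Finset.univ_nonempty, ?_⟩,
    fun ⟨s, hs, h⟩ => h.of_induce hconn hs⟩
  exact h.of_iso ⟨Equiv.subtypeUnivEquiv Finset.mem_univ, Iff.rfl⟩

/-- A connected nonempty graph `G` is `d₀`-KP if and only if some nonempty induced
subgraph of `G` is `d₀`-KP. -/
theorem d0KP_iff_induced {V : Type*} [Fintype V] [DecidableEq V] [Nonempty V]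
    (G : SimpleGraph V) (hconn : G.Connected) :
    IsD0KP G ↔ ∃ s : Finset V, s.Nonempty ∧ IsD0KP (G.induce (s : Set V)) :=
  d0KP_iff_induced_general G hconn
end
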